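/- Suppose P^{m+1}, P^m, Q^{m+1}, Q^m, U ∈ R^N, D is a real symmetric N×N matrix, τ > 0, and the vectors satisfy (P^{m+1} - P^m)/τ = (1/2) D Q̄ + U·Q̄ and (Q^{m+1} - Q^m)/τ = -(1/2) D P̄ - U·P̄, where P̄ = (P^{m+1} + P^m)/2, Q̄ = (Q^{m+1} + Q^m)/2, and · denotes entrywise multiplication. Then ‖P^{m+1}‖² + ‖Q^{m+1}‖² = ‖P^m‖² + ‖Q^m‖². -/

import Mathlib

/-!
Write `Pᵐ⁺¹ - Pᵐ = (τ/2) A (Qᵐ⁺¹ + Qᵐ)` and `Qᵐ⁺¹ - Qᵐ = -(τ/2) A (Pᵐ⁺¹ + Pᵐ)` with the symmetric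
matrix `A = D/2 + diag U`. Since `‖x‖² - ‖y‖² = ⟪x + y, x - y⟫`, the changes of `‖P‖²` and `‖Q‖²`
are `(τ/2) ⟪Pᵐ⁺¹ + Pᵐ, A (Qᵐ⁺¹ + Qᵐ)⟫` and `-(τ/2) ⟪Qᵐ⁺¹ + Qᵐ, A (Pᵐ⁺¹ + Pᵐ)⟫`, which cancel
because `A` is symmetric.
-/

open RealInnerProductSpace Matrix

theorem norm_sq_sub_norm_sq_eq_inner {F : Type*} [NormedAddCommGroup F] [InnerProductSpace ℝ F]
    (x y : F) : ‖x‖ ^ 2 - ‖y‖ ^ 2 = ⟪x + y, x - y⟫ := by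
  simp only [inner_add_left, inner_sub_right, real_inner_self_eq_norm_sq, real_inner_comm x y]
  ring

theorem LinearMap.IsSymmetric.norm_sq_add_norm_sq_eq_of_implicit_midpoint
    {F : Type*} [NormedAddCommGroup F] [InnerProductSpace ℝ F] {T : F →ₗ[ℝ] F}
    (hT : T.IsSymmetric) {p₀ p₁ q₀ q₁ : F}
    (hp : p₁ - p₀ = T (q₁ + q₀)) (hq : q₁ - q₀ = -T (p₁ + p₀)) :
    ‖p₁‖ ^ 2 + ‖q₁‖ ^ 2 = ‖p₀‖ ^ 2 + ‖q₀‖ ^ 2 := by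
  have h : (‖p₁‖ ^ 2 - ‖p₀‖ ^ 2) + (‖q₁‖ ^ 2 - ‖q₀‖ ^ 2) = 0 := by
    rw [norm_sq_sub_norm_sq_eq_inner, norm_sq_sub_norm_sq_eq_inner, hp, hq, inner_neg_right,
      ← hT, real_inner_comm]
    ring
  linarith

theorem Matrix.toEuclideanLin_smul_add_diagonal {n : Type*} [Fintype n] [DecidableEq n]
    (c : ℝ) (D : Matrix n n ℝ) (U x : EuclideanSpace ℝ n) :
    toEuclideanLin (c • D + diagonal U) x = WithLp.toLp 2 (c • D *ᵥ x + fun i => U i * x i) := by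
  rw [toLpLin_apply, add_mulVec, smul_mulVec]
  congr 2
  ext i
  rw [mulVec_diagonal]

theorem Matrix.isHermitian_smul_add_diagonal {n : Type*} [DecidableEq n] {D : Matrix n n ℝ}
    (hD : Dᵀ = D) (c : ℝ) (U : n → ℝ) : (c • D + diagonal U).IsHermitian :=
  (IsHermitian.smul ((conjTranspose_eq_transpose_of_trivial D).trans hD) (IsSelfAdjoint.all c)).add
    (isHermitian_diagonal U)

/-- Discrete mass conservation for the FPAVF scheme: if
`(Pᵐ⁺¹ - Pᵐ)/τ = (1/2) D Q̄ + U·Q̄` and `(Qᵐ⁺¹ - Qᵐ)/τ = -(1/2) D P̄ - U·P̄`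
with `P̄, Q̄` the midpoint averages, `D` symmetric and `τ > 0`, then
`‖Pᵐ⁺¹‖² + ‖Qᵐ⁺¹‖² = ‖Pᵐ‖² + ‖Qᵐ‖²`. -/
theorem discrete_mass_conservation_FPAVF {N : ℕ}
    (D : Matrix (Fin N) (Fin N) ℝ) (hD : D.transpose = D)
    (τ : ℝ) (hτ : 0 < τ)
    (P0 P1 Q0 Q1 U : EuclideanSpace ℝ (Fin N))
    (hP : (1/τ) • (P1 - P0) =
      (WithLp.toLp 2 ((1/2 : ℝ) • D.mulVec ((1/2 : ℝ) • (Q1 + Q0)) +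
        fun i => U i * ((1/2 : ℝ) • (Q1 + Q0)) i : Fin N → ℝ) :
          EuclideanSpace ℝ (Fin N)))
    (hQ : (1/τ) • (Q1 - Q0) =
      (WithLp.toLp 2 (-((1/2 : ℝ) • D.mulVec ((1/2 : ℝ) • (P1 + P0))) -
        fun i => U i * ((1/2 : ℝ) • (P1 + P0)) i : Fin N → ℝ) :
          EuclideanSpace ℝ (Fin N))) :
    ‖P1‖ ^ 2 + ‖Q1‖ ^ 2 = ‖P0‖ ^ 2 + ‖Q0‖ ^ 2 := by
  set A := toEuclideanLin ((1/2 : ℝ) • D + diagonal U)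
  have hA : A.IsSymmetric :=
    isSymmetric_toEuclideanLin_iff.2 (isHermitian_smul_add_diagonal hD _ U)
  have unscale (x y s : EuclideanSpace ℝ (Fin N)) (h : (1/τ) • (x - y) = A ((1/2 : ℝ) • s)) :
      x - y = ((τ / 2) • A) s := by
    rwa [one_div, inv_smul_eq_iff₀ hτ.ne', map_smul, smul_smul, mul_one_div] at h
  have hQ' : (1/τ) • (Q1 - Q0) = A ((1/2 : ℝ) • -(P1 + P0)) := by
    rw [hQ, smul_neg, map_neg, toEuclideanLin_smul_add_diagonal, ← WithLp.toLp_neg, neg_add']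
    rfl -- `WithLp.ofLp` commutes with `+` and `•` definitionally
  exact (hA.smul (c := τ / 2) rfl).norm_sq_add_norm_sq_eq_of_implicit_midpoint
    (unscale _ _ _ (hP.trans (toEuclideanLin_smul_add_diagonal _ _ _ _).symm))
    ((unscale _ _ _ hQ').trans (map_neg _ _))
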